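/- arXiv:0905.1374 — 2 statements merged into one kernel-verified Lean document; each statement's English description precedes it below -/
import Mathlib

section
/- Let n ≥ 2 and fix the reduced word i = (1)(2,1)(3,2,1)...(n-1,...,1) for the longest element of S_n, of length l = n(n-1)/2. Define the column sets C^(k) = s_{i_1} s_{i_2} ... s_{i_k}({1,...,i_k}) for 1 ≤ k ≤ l. Then each C^(k) is an interval: if a < c < b and a, b ∈ C^(k), then c ∈ C^(k). -/
/-- The word `(1)(2,1)(3,2,1)…(n-1,…,1)`, a reduced word for the longest
element of the symmetric group `S_n`. -/
def BSword (n : ℕ) : List ℕ :=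
  (List.range (n - 1)).flatMap fun j => (((List.range (j + 1)).map (· + 1)).reverse)

/-- The permutation `s_{i_1} s_{i_2} ⋯ s_{i_k}`, product of the adjacent
transpositions given by the first `k` letters of the word, acting on `ℕ`
(only `{1,…,n}` is moved). -/
noncomputable def BSperm (n k : ℕ) : Equiv.Perm ℕ :=
  (((BSword n).take k).map fun i => Equiv.swap i (i + 1)).prod

/-- The column set `C^(k+1) = s_{i_1} ⋯ s_{i_{k+1}} {1, …, i_{k+1}}`
(here `k` is 0-indexed, so `BScolumn n k` is the column set `C^(k+1)` of the paper). -/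
noncomputable def BScolumn (n k : ℕ) : Finset ℕ :=
  (Finset.Icc 1 ((BSword n).getD k 0)).image (BSperm n (k + 1))

/-!
Position `k` of the word lies in the block `(j + 1, j, …, 1)` with `j = s + u`, at offset `s`,
so its letter is `u + 1`. The blocks before it form a reduced word of the reversal
`x ↦ j + 2 - x` of `{1, …, j + 1}`, and the initial part `(j + 1, …, u + 1)` of the current block
is the cycle sending `u + 1` to `j + 2` and shifting `{u + 2, …, j + 2}` down by one.
So `{1, …, u + 1}` goes first to `{1, …, u} ∪ {j + 2}` and then to the interval `{s + 2, …, j + 2}`.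
-/

/-- The permutation `s_{w_1} s_{w_2} ⋯ s_{w_k}` of a word `w`. -/
noncomputable def wordPerm (w : List ℕ) : Equiv.Perm ℕ :=
  (w.map fun i => Equiv.swap i (i + 1)).prod

/-- The descending run `(b + t, b + t - 1, …, b + 1)`. -/
def descRun (b t : ℕ) : List ℕ :=
  ((List.range t).map (· + (b + 1))).reverse

def staircase (m : ℕ) : List ℕ :=
  (List.range m).flatMap fun j => descRun 0 (j + 1)

lemma wordPerm_append (v w : List ℕ) : wordPerm (v ++ w) = wordPerm v * wordPerm w := by
  simp only [wordPerm, List.map_append, List.prod_append]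

lemma BSword_eq_staircase (n : ℕ) : BSword n = staircase (n - 1) := rfl

lemma BSperm_eq_wordPerm (n k : ℕ) : BSperm n k = wordPerm ((BSword n).take k) := rfl

@[simp]
lemma descRun_length (b t : ℕ) : (descRun b t).length = t := by
  simp [descRun]

lemma descRun_succ (b t : ℕ) : descRun b (t + 1) = (b + t + 1) :: descRun b t := by
  simp [descRun, List.range_succ]
  omega

lemma descRun_add (b t u : ℕ) : descRun b (t + u) = descRun (b + u) t ++ descRun b u := by
  induction t with
  | zero => simp [descRun]
  | succ t ih =>
    rw [Nat.add_right_comm, descRun_succ, ih, descRun_succ, List.cons_append]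
    congr 1
    omega

lemma staircase_succ (m : ℕ) : staircase (m + 1) = staircase m ++ descRun 0 (m + 1) := by
  simp [staircase, List.range_succ]

lemma wordPerm_descRun_apply (b t x : ℕ) : wordPerm (descRun b t) x =
    if x = b + 1 then b + t + 1 else if b + 2 ≤ x ∧ x ≤ b + t + 1 then x - 1 else x := by
  induction t with
  | zero => simp [descRun, wordPerm]; split_ifs <;> omega
  | succ t ih =>
    rw [descRun_succ, ← List.singleton_append, wordPerm_append, Equiv.Perm.mul_apply, ih]
    simp only [wordPerm, List.map_cons, List.map_nil, List.prod_cons, List.prod_nil, mul_one,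
      Equiv.swap_apply_def]
    split_ifs <;> omega

lemma wordPerm_staircase_apply (m x : ℕ) : wordPerm (staircase m) x =
    if 1 ≤ x ∧ x ≤ m + 1 then m + 2 - x else x := by
  induction m generalizing x with
  | zero => simp [staircase, wordPerm]; omega
  | succ m ih =>
    rw [staircase_succ, wordPerm_append, Equiv.Perm.mul_apply, wordPerm_descRun_apply, ih]
    split_ifs <;> omega

lemma image_wordPerm_staircase_append_descRun (s u : ℕ) :
    (Finset.Icc 1 (u + 1)).image (wordPerm (staircase (s + u) ++ descRun u (s + 1))) =
      Finset.Icc (s + 2) (s + u + 2) := by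
  apply Finset.eq_of_subset_of_card_le
  · intro y hy
    obtain ⟨x, hx, rfl⟩ := Finset.mem_image.mp hy
    rw [Finset.mem_Icc] at hx ⊢
    rw [wordPerm_append, Equiv.Perm.mul_apply, wordPerm_descRun_apply, wordPerm_staircase_apply]
    split_ifs <;> omega
  · rw [Finset.card_image_of_injective _ (Equiv.injective _), Nat.card_Icc, Nat.card_Icc]
    omega

lemma exists_staircase_eq_append (m k : ℕ) (hk : k < (staircase m).length) :
    ∃ s u rest, k = (staircase (s + u)).length + s ∧
      staircase m = staircase (s + u) ++ descRun (u + 1) s ++ (u + 1) :: rest := by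
  induction m with
  | zero => simp [staircase] at hk
  | succ m ih =>
    rw [staircase_succ, List.length_append, descRun_length] at hk
    by_cases hkm : k < (staircase m).length
    · obtain ⟨s, u, rest, hks, hm⟩ := ih hkm
      exact ⟨s, u, rest ++ descRun 0 (m + 1), hks, by simp [staircase_succ, hm]⟩
    · set s := k - (staircase m).length
      have hsm : s ≤ m := by omega
      refine ⟨s, m - s, descRun 0 (m - s), by rw [Nat.add_sub_cancel' hsm]; omega, ?_⟩
      have hrun : descRun 0 (m + 1) =
          descRun (m - s + 1) s ++ (m - s + 1) :: descRun 0 (m - s) := by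
        rw [show m + 1 = s + (m - s + 1) by omega, descRun_add, descRun_succ]
        simp
      rw [Nat.add_sub_cancel' hsm, staircase_succ, hrun, List.append_assoc]

lemma exists_BScolumn_eq_Icc (n k : ℕ) (hk : k < (BSword n).length) :
    ∃ p q, BScolumn n k = Finset.Icc p q := by
  obtain ⟨s, u, rest, rfl, hw⟩ := exists_staircase_eq_append (n - 1) k hk
  refine ⟨s + 2, s + u + 2, ?_⟩
  have hlen :
      (staircase (s + u) ++ descRun (u + 1) s).length = (staircase (s + u)).length + s := by
    simp
  have htake : (BSword n).take ((staircase (s + u)).length + s + 1) =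
      staircase (s + u) ++ descRun u (s + 1) := by
    rw [BSword_eq_staircase, hw, ← hlen, List.take_length_add_append, descRun_add u s 1,
      List.append_assoc]
    simp [descRun]
  have hletter : (BSword n).getD ((staircase (s + u)).length + s) 0 = u + 1 := by
    rw [BSword_eq_staircase, hw, ← hlen]
    simp
  rw [BScolumn, BSperm_eq_wordPerm, htake, hletter, image_wordPerm_staircase_append_descRun]

theorem column_sets_are_intervals_general (n : ℕ)
    (k : ℕ) (hk : k < (BSword n).length)
    (a b c : ℕ) (ha : a ∈ BScolumn n k) (hb : b ∈ BScolumn n k)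
    (hac : a < c) (hcb : c < b) : c ∈ BScolumn n k := by
  obtain ⟨p, q, hpq⟩ := exists_BScolumn_eq_Icc n k hk
  rw [hpq, Finset.mem_Icc] at ha hb ⊢
  omega

/-- Each column set `C^(k)` is an interval: if `a < c < b`
and `a, b ∈ C^(k)` then `c ∈ C^(k)`. -/
theorem column_sets_are_intervals (n : ℕ) (hn : 2 ≤ n)
    (k : ℕ) (hk : k < (BSword n).length)
    (a b c : ℕ) (ha : a ∈ BScolumn n k) (hb : b ∈ BScolumn n k)
    (hac : a < c) (hcb : c < b) : c ∈ BScolumn n k :=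
  column_sets_are_intervals_general n k hk a b c ha hb hac hcb
end

section
/- Every straight tableau whose shape is a skew Young diagram (k,k,...,k)\(λ_1,...,λ_r) with k ≥ λ_1 ≥ ... ≥ λ_r ≥ 0 is a contra-tableau; that is, if a row-standard filling of such a skew shape satisfies the straightness condition (for cells (i,k') and (j,k') in the same column with i < j, the entry at (i,k') exceeds the entry at (j,k') only if cell (i,k'-1) exists and its entry is ≥ the entry at (j,k')), then the entries in each column are weakly increasing from top to bottom and entries in each row are strictly increasing left to right. -/
/-!
If an upper row exceeds a lower one in column `c`, straightness gives
`T j c ≤ T i (c - 1)`, and row-standardness of the lower row turns this into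
`T j (c - 1) < T i (c - 1)`: a violation one column further left. Induction on the
column therefore rules out all violations; the skew shape matters only in that a
lower row starts no further right than an upper one.
-/

theorem le_of_straight_of_strictMonoOn {a k : ℕ} {u v : ℕ → ℕ}
    (hv : StrictMonoOn v (Set.Icc (a + 1) k))
    (hstraight : ∀ c ∈ Set.Icc (a + 1) k, v c < u c → a + 1 ≤ c - 1 ∧ v c ≤ u (c - 1)) :
    ∀ c ∈ Set.Icc (a + 1) k, u c ≤ v c := by
  intro c
  induction c using Nat.strong_induction_on with
  | _ c ih =>
    intro hc
    by_contra! hviol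
    obtain ⟨hstart, hle⟩ := hstraight c hc hviol
    have hprev : c - 1 ∈ Set.Icc (a + 1) k := ⟨hstart, (Nat.sub_le c 1).trans hc.2⟩
    have hu : u (c - 1) ≤ v (c - 1) := ih (c - 1) (by omega) hprev
    have hv' : v (c - 1) < v c := hv hprev hc (by omega)
    omega

theorem straight_tableau_on_skew_shape_is_contra_general
    (k r : ℕ) (lam : ℕ → ℕ) (T : ℕ → ℕ → ℕ)
    (hdec : ∀ i j : ℕ, 1 ≤ i → i ≤ j → j ≤ r → lam j ≤ lam i) :
    -- cell `(i, c)` belongs to the skew shape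
    let InShape : ℕ → ℕ → Prop := fun i c => 1 ≤ i ∧ i ≤ r ∧ lam i + 1 ≤ c ∧ c ≤ k
    -- row-standard: entries strictly increase from left to right in each row
    (∀ i c c', InShape i c → InShape i c' → c < c' → T i c < T i c') →
    -- straightness condition
    (∀ i j c, i < j → InShape i c → InShape j c → T j c < T i c →
      (lam i + 1 ≤ c - 1) ∧ T j c ≤ T i (c - 1)) →
    -- conclusion: `T` is a contra-tableau
    ((∀ i j c, i < j → InShape i c → InShape j c → T i c ≤ T j c) ∧
     (∀ i c c', InShape i c → InShape i c' → c < c' → T i c < T i c')) := by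
  intro InShape hrow hstraight
  refine ⟨fun i j c hij hic hjc => ?_, hrow⟩
  have hlam : lam j ≤ lam i := hdec i j hic.1 hij.le hjc.2.1
  have hshape : ∀ c' ∈ Set.Icc (lam i + 1) k, InShape i c' ∧ InShape j c' :=
    fun c' hc' => ⟨⟨hic.1, hic.2.1, hc'.1, hc'.2⟩,
      ⟨hjc.1, hjc.2.1, (Nat.add_le_add_right hlam 1).trans hc'.1, hc'.2⟩⟩
  have hrow_j : StrictMonoOn (T j) (Set.Icc (lam i + 1) k) :=
    fun c₁ hc₁ c₂ hc₂ hlt => hrow j c₁ c₂ (hshape c₁ hc₁).2 (hshape c₂ hc₂).2 hlt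
  exact le_of_straight_of_strictMonoOn hrow_j
    (fun c' hc' => hstraight i j c' hij (hshape c' hc').1 (hshape c' hc').2)
    c ⟨hic.2.2.1, hic.2.2.2⟩

/-- Every straight tableau on a skew shape
`(k,…,k)\(λ₁,…,λ_r)` (with `k ≥ λ₁ ≥ ⋯ ≥ λ_r ≥ 0`) is a contra-tableau.
Rows are indexed `1,…,r` from top to bottom; row `i` occupies columns
`λ_i + 1, …, k`. If a row-standard filling `T` (strictly increasing along rows)
satisfies the straightness condition — for cells `(i,c)` and `(j,c)` in the same
column with `i < j`, the entry at `(i,c)` exceeds the entry at `(j,c)` only if the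
cell `(i,c-1)` exists and its entry is `≥` the entry at `(j,c)` — then the entries
of `T` are weakly increasing down each column and strictly increasing along each row. -/
theorem straight_tableau_on_skew_shape_is_contra
    (k r : ℕ) (lam : ℕ → ℕ) (T : ℕ → ℕ → ℕ)
    (hdec : ∀ i j : ℕ, 1 ≤ i → i ≤ j → j ≤ r → lam j ≤ lam i)
    (hlamk : ∀ i : ℕ, 1 ≤ i → i ≤ r → lam i ≤ k) :
    -- cell `(i, c)` belongs to the skew shape
    let InShape : ℕ → ℕ → Prop := fun i c => 1 ≤ i ∧ i ≤ r ∧ lam i + 1 ≤ c ∧ c ≤ k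
    -- row-standard: entries strictly increase from left to right in each row
    (∀ i c c', InShape i c → InShape i c' → c < c' → T i c < T i c') →
    -- straightness condition
    (∀ i j c, i < j → InShape i c → InShape j c → T j c < T i c →
      (lam i + 1 ≤ c - 1) ∧ T j c ≤ T i (c - 1)) →
    -- conclusion: `T` is a contra-tableau
    ((∀ i j c, i < j → InShape i c → InShape j c → T i c ≤ T j c) ∧
     (∀ i c c', InShape i c → InShape i c' → c < c' → T i c < T i c')) :=
  straight_tableau_on_skew_shape_is_contra_general k r lam T hdec
end
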